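/- If A is a Hermitian matrix with at least three distinct eigenvalues, then there exists a nonscalar Hermitian matrix B with A' ⊆ B' and A' ≠ B'. Consequently, a nonscalar Hermitian matrix has exactly two distinct eigenvalues if and only if its commutant is maximal among commutants of nonscalar Hermitian matrices. -/

import Mathlib

open Matrix ComplexOrder

/-- The commutant of a Hermitian matrix within the Hermitian matrices. -/
def HermComm {n : ℕ} (A : Matrix (Fin n) (Fin n) ℂ) : Set (Matrix (Fin n) (Fin n) ℂ) :=
  {C | C.IsHermitian ∧ A * C = C * A}

/-- `A` is a nonscalar matrix. -/
def Nonscalar {n : ℕ} (A : Matrix (Fin n) (Fin n) ℂ) : Prop :=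
  ∀ t : ℝ, A ≠ (t : ℂ) • 1

namespace ThreeEV

variable {n : ℕ}

/-! ### Diagonal matrix lemmas -/

lemma diag_comm_iff (g : Fin n → ℂ) (C : Matrix (Fin n) (Fin n) ℂ) :
    diagonal g * C = C * diagonal g ↔ ∀ i j, g i ≠ g j → C i j = 0 := by
  constructor
  · intro h i j hij
    have h2 := congrFun (congrFun h i) j
    rw [diagonal_mul, mul_diagonal] at h2
    have : (g i - g j) * C i j = 0 := by linear_combination h2
    rcases mul_eq_zero.mp this with h' | h'
    · exact absurd (sub_eq_zero.mp h') hij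
    · exact h'
  · intro h
    ext i j
    rw [diagonal_mul, mul_diagonal]
    by_cases hg : g i = g j
    · rw [hg, mul_comm]
    · rw [h i j hg, mul_zero, zero_mul]

lemma mem_hermComm_diag (g : Fin n → ℂ) (C : Matrix (Fin n) (Fin n) ℂ) :
    C ∈ HermComm (diagonal g) ↔ C.IsHermitian ∧ ∀ i j, g i ≠ g j → C i j = 0 := by
  unfold HermComm
  rw [Set.mem_setOf_eq, diag_comm_iff]

lemma herm_real_diag (v : Fin n → ℝ) :
    (diagonal (fun i => (v i : ℂ))).IsHermitian := by
  apply isHermitian_diagonal_of_self_adjoint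
  show star _ = _
  funext i
  simp [Complex.conj_ofReal]

lemma diag_const_eq_smul_one (a : ℂ) :
    (diagonal (fun _ : Fin n => a)) = a • 1 := by
  ext p q
  by_cases h : p = q
  · subst h; simp
  · simp [diagonal_apply_ne _ h, Matrix.one_apply_ne h]

/-! ### Unitary conjugation lemmas -/

variable (U : Matrix.unitaryGroup (Fin n) ℂ)

local notation "V" => (U : Matrix (Fin n) (Fin n) ℂ)

lemma hVVs : V * star V = 1 := Matrix.mem_unitaryGroup_iff.mp U.2
lemma hVsV : star V * V = 1 := Matrix.mem_unitaryGroup_iff'.mp U.2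

lemma conj_conj (C : Matrix (Fin n) (Fin n) ℂ) :
    V * (star V * C * V) * star V = C := by
  simp only [← Matrix.mul_assoc]
  rw [hVVs, Matrix.one_mul, Matrix.mul_assoc, hVVs, Matrix.mul_one]

lemma unconj_conj (C : Matrix (Fin n) (Fin n) ℂ) :
    star V * (V * C * star V) * V = C := by
  simp only [← Matrix.mul_assoc]
  rw [hVsV, Matrix.one_mul, Matrix.mul_assoc, hVsV, Matrix.mul_one]

lemma conj_inj {X Y : Matrix (Fin n) (Fin n) ℂ}
    (h : V * X * star V = V * Y * star V) : X = Y := by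
  have := congrArg (fun M => star V * M * V) h
  simpa only [unconj_conj] using this

lemma conjT_conj (C : Matrix (Fin n) (Fin n) ℂ) :
    (V * C * star V)ᴴ = V * Cᴴ * star V := by
  simp [Matrix.star_eq_conjTranspose, conjTranspose_mul, Matrix.mul_assoc]

lemma isHermitian_conj_iff (C : Matrix (Fin n) (Fin n) ℂ) :
    (V * C * star V).IsHermitian ↔ C.IsHermitian := by
  unfold Matrix.IsHermitian
  rw [conjT_conj]
  exact ⟨fun h => conj_inj U h, fun h => by rw [h]⟩

lemma mulConj (X Y : Matrix (Fin n) (Fin n) ℂ) :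
    (V * X * star V) * (V * Y * star V) = V * (X * Y) * star V := by
  have h : ∀ Z : Matrix (Fin n) (Fin n) ℂ, star V * (V * Z) = Z := fun Z => by
    rw [← Matrix.mul_assoc, hVsV, Matrix.one_mul]
  simp only [Matrix.mul_assoc, h]

lemma hermComm_conj_mem (M C : Matrix (Fin n) (Fin n) ℂ) :
    (V * C * star V) ∈ HermComm (V * M * star V) ↔ C ∈ HermComm M := by
  unfold HermComm
  simp only [Set.mem_setOf_eq, isHermitian_conj_iff, mulConj]
  constructor
  · rintro ⟨h1, h2⟩
    exact ⟨h1, conj_inj U h2⟩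
  · rintro ⟨h1, h2⟩
    exact ⟨h1, by rw [h2]⟩

lemma mem_hermComm_conj_iff (M C : Matrix (Fin n) (Fin n) ℂ) :
    C ∈ HermComm (V * M * star V) ↔ (star V * C * V) ∈ HermComm M := by
  rw [← hermComm_conj_mem U M (star V * C * V), conj_conj]

lemma conj_smul_one (t : ℂ) : V * (t • 1) * star V = t • 1 := by
  rw [Matrix.mul_smul, Matrix.mul_one, Matrix.smul_mul, hVVs]

lemma nonscalar_conj_iff (M : Matrix (Fin n) (Fin n) ℂ) :
    Nonscalar (V * M * star V) ↔ Nonscalar M := by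
  unfold Nonscalar
  constructor
  · intro h t hM
    exact h t (by rw [hM, conj_smul_one])
  · intro h t hM
    exact h t (conj_inj U (by rw [hM, conj_smul_one]))

/-! ### Spectrum lemmas -/

lemma spec_eq {A : Matrix (Fin n) (Fin n) ℂ} (hA : A.IsHermitian) :
    spectrum ℂ A = Set.range (fun i => ((hA.eigenvalues i : ℝ) : ℂ)) := by
  conv_lhs => rw [hA.spectral_theorem, Unitary.conjStarAlgAut_apply, Unitary.spectrum_star_right_conjugate,
    spectrum_diagonal]
  ext x
  simp [Function.comp, RCLike.ofReal]

lemma ncard_spec {A : Matrix (Fin n) (Fin n) ℂ} (hA : A.IsHermitian) :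
    (spectrum ℂ A).ncard = (Set.range hA.eigenvalues).ncard := by
  rw [spec_eq hA]
  have h1 : Set.range (fun i => ((hA.eigenvalues i : ℝ) : ℂ))
      = (fun x : ℝ => (x : ℂ)) '' Set.range hA.eigenvalues := by
    rw [← Set.range_comp]; rfl
  rw [h1, Set.ncard_image_of_injective _ Complex.ofReal_injective]

lemma range_eq_coe_image (d : Fin n → ℝ) :
    Set.range d = ↑(Finset.univ.image d) := by
  rw [Finset.coe_image, Finset.coe_univ, Set.image_univ]

lemma exists_three_distinct (d : Fin n → ℝ) (h : 3 ≤ (Set.range d).ncard) :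
    ∃ i j k, d i ≠ d j ∧ d i ≠ d k ∧ d j ≠ d k := by
  rw [range_eq_coe_image, Set.ncard_coe_finset] at h
  set s := Finset.univ.image d with hs
  obtain ⟨a, ha⟩ := Finset.card_pos.mp (show 0 < s.card by omega)
  have h2 : 2 ≤ (s.erase a).card := by
    have := Finset.card_erase_of_mem ha; omega
  obtain ⟨b, hb⟩ := Finset.card_pos.mp (show 0 < (s.erase a).card by omega)
  have h3 : 1 ≤ ((s.erase a).erase b).card := by
    have := Finset.card_erase_of_mem hb; omega
  obtain ⟨c, hc⟩ := Finset.card_pos.mp (show 0 < ((s.erase a).erase b).card by omega)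
  have hba : b ≠ a := (Finset.mem_erase.mp hb).1
  have hcb : c ≠ b := (Finset.mem_erase.mp hc).1
  have hca : c ≠ a := (Finset.mem_erase.mp (Finset.mem_erase.mp hc).2).1
  have hbs : b ∈ s := (Finset.mem_erase.mp hb).2
  have hcs : c ∈ s := (Finset.mem_erase.mp (Finset.mem_erase.mp hc).2).2
  obtain ⟨i, _, hi⟩ := Finset.mem_image.mp ha
  obtain ⟨j, _, hj⟩ := Finset.mem_image.mp hbs
  obtain ⟨k, _, hk⟩ := Finset.mem_image.mp hcs
  exact ⟨i, j, k, by rw [hi, hj]; exact fun h => hba h.symm,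
    by rw [hi, hk]; exact fun h => hca h.symm, by rw [hj, hk]; exact fun h => hcb h.symm⟩

/-! ### Part 1, diagonal case -/

lemma part1_diag (d : Fin n → ℝ) {i j k : Fin n}
    (hij : d i ≠ d j) (hik : d i ≠ d k) (hjk : d j ≠ d k) :
    ∃ B₀ : Matrix (Fin n) (Fin n) ℂ, B₀.IsHermitian ∧ Nonscalar B₀ ∧
      HermComm (diagonal (fun p => (d p : ℂ))) ⊆ HermComm B₀ ∧
      ∃ C : Matrix (Fin n) (Fin n) ℂ, C ∈ HermComm B₀ ∧
        C ∉ HermComm (diagonal (fun p => (d p : ℂ))) := by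
  set e : Fin n → ℝ := fun p => if d p = d i then 0 else 1 with he
  refine ⟨diagonal (fun p => (e p : ℂ)), herm_real_diag e, ?_, ?_, ?_⟩
  · -- nonscalar
    intro t h
    have h1 := congrFun (congrFun h i) i
    have h2 := congrFun (congrFun h j) j
    simp only [diagonal_apply_eq, Matrix.smul_apply, Matrix.one_apply_eq, smul_eq_mul,
      mul_one] at h1 h2
    have hei : e i = 0 := if_pos rfl
    have hej : e j = 1 := if_neg (fun h => hij h.symm)
    rw [hei] at h1
    rw [hej] at h2
    rw [← h1] at h2
    norm_num at h2
  · -- commutant inclusion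
    intro C hC
    rw [mem_hermComm_diag] at hC ⊢
    refine ⟨hC.1, fun p q hpq => ?_⟩
    apply hC.2
    intro hd
    apply hpq
    have hd' : d p = d q := by exact_mod_cast hd
    simp only [he]
    rw [hd']
  · -- witness
    set C : Matrix (Fin n) (Fin n) ℂ :=
      Matrix.of (fun p q => if (p = j ∧ q = k) ∨ (p = k ∧ q = j) then (1:ℂ) else 0) with hCdef
    have hCapp : ∀ p q, C p q = if (p = j ∧ q = k) ∨ (p = k ∧ q = j) then (1:ℂ) else 0 :=
      fun p q => rfl
    refine ⟨C, ?_, ?_⟩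
    · rw [mem_hermComm_diag]
      constructor
      · -- Hermitian
        ext p q
        rw [conjTranspose_apply, hCapp, hCapp]
        by_cases h1 : (q = j ∧ p = k) ∨ (q = k ∧ p = j)
        · rw [if_pos h1, if_pos (by tauto)]
          simp
        · rw [if_neg h1, if_neg (by tauto)]
          simp
      · intro p q hpq
        rw [hCapp]
        apply if_neg
        rintro (⟨rfl, rfl⟩ | ⟨rfl, rfl⟩)
        · apply hpq
          have : e p = e q := by
            simp only [he]
            rw [if_neg (fun h => hij h.symm), if_neg (fun h => hik h.symm)]
          exact_mod_cast congrArg (fun x : ℝ => (x : ℂ)) this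
        · apply hpq
          have : e p = e q := by
            simp only [he]
            rw [if_neg (fun h => hik h.symm), if_neg (fun h => hij h.symm)]
          exact_mod_cast congrArg (fun x : ℝ => (x : ℂ)) this
    · intro hmem
      rw [mem_hermComm_diag] at hmem
      have := hmem.2 j k (by exact_mod_cast hjk)
      rw [hCapp] at this
      simp at this

/-! ### Part 1, general case -/

lemma part1 {n : ℕ} (A : Matrix (Fin n) (Fin n) ℂ) (hA : A.IsHermitian)
    (h3 : 3 ≤ (spectrum ℂ A).ncard) :
    ∃ B : Matrix (Fin n) (Fin n) ℂ, B.IsHermitian ∧ Nonscalar B ∧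
      HermComm A ⊆ HermComm B ∧ HermComm A ≠ HermComm B := by
  set U := hA.eigenvectorUnitary with hU
  set d := hA.eigenvalues with hd
  set D : Matrix (Fin n) (Fin n) ℂ := diagonal (fun p => (d p : ℂ)) with hD
  have hAeq : A = (U : Matrix (Fin n) (Fin n) ℂ) * D * star (U : Matrix (Fin n) (Fin n) ℂ) :=
    hA.spectral_theorem
  rw [ncard_spec hA] at h3
  obtain ⟨i, j, k, hij, hik, hjk⟩ := exists_three_distinct d h3
  obtain ⟨B₀, hB₀h, hB₀ns, hB₀sub, C₀, hC₀mem, hC₀nmem⟩ := part1_diag d hij hik hjk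
  refine ⟨(U : Matrix (Fin n) (Fin n) ℂ) * B₀ * star (U : Matrix (Fin n) (Fin n) ℂ),
    (isHermitian_conj_iff U B₀).mpr hB₀h, (nonscalar_conj_iff U B₀).mpr hB₀ns, ?_, ?_⟩
  · intro C hC
    rw [hAeq, mem_hermComm_conj_iff] at hC
    rw [mem_hermComm_conj_iff]
    exact hB₀sub hC
  · intro heq
    have h1 : (U : Matrix (Fin n) (Fin n) ℂ) * C₀ * star (U : Matrix (Fin n) (Fin n) ℂ)
        ∈ HermComm ((U : Matrix (Fin n) (Fin n) ℂ) * B₀ * star (U : Matrix (Fin n) (Fin n) ℂ)) :=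
      (hermComm_conj_mem U B₀ C₀).mpr hC₀mem
    rw [← heq, hAeq, hermComm_conj_mem] at h1
    exact hC₀nmem h1

/-! ### Part 2, diagonal case -/

lemma part2_diag (d : Fin n → ℝ) {a b : ℝ} (hab : a ≠ b)
    (hmem : ∀ p, d p = a ∨ d p = b) (ha : ∃ p, d p = a) (hb : ∃ p, d p = b)
    (B₀ : Matrix (Fin n) (Fin n) ℂ) (hB₀ : B₀.IsHermitian) (hns : Nonscalar B₀)
    (hsub : HermComm (diagonal (fun p => (d p : ℂ))) ⊆ HermComm B₀) :
    HermComm B₀ ⊆ HermComm (diagonal (fun p => (d p : ℂ))) := by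
  obtain ⟨ia, hia⟩ := ha
  obtain ⟨ib, hib⟩ := hb
  -- B₀ is diagonal
  have hoff : ∀ p r, p ≠ r → B₀ p r = 0 := by
    intro p r hpr
    set Ep : Matrix (Fin n) (Fin n) ℂ :=
      diagonal (fun q => ((if q = p then (1:ℝ) else 0 : ℝ) : ℂ)) with hEp
    have hEpmem : Ep ∈ HermComm (diagonal (fun p => (d p : ℂ))) := by
      rw [mem_hermComm_diag]
      refine ⟨herm_real_diag _, fun x y hxy => ?_⟩
      apply diagonal_apply_ne
      intro h; exact hxy (by rw [h])
    have hcomm := (hsub hEpmem).2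
    have h2 := congrFun (congrFun hcomm p) r
    rw [hEp, mul_diagonal, diagonal_mul] at h2
    simp only [if_pos rfl, if_neg (fun h : r = p => hpr h.symm)] at h2
    simpa using h2.symm
  have hBdiag : B₀ = diagonal (fun p => B₀ p p) := by
    ext p q
    by_cases h : p = q
    · subst h; simp
    · rw [diagonal_apply_ne _ h]; exact hoff p q h
  -- equality within blocks
  have hblock : ∀ p q, d p = d q → B₀ p p = B₀ q q := by
    intro p q hdpq
    by_cases hpq : p = q
    · rw [hpq]
    · set C : Matrix (Fin n) (Fin n) ℂ :=
        Matrix.of (fun x y => if (x = p ∧ y = q) ∨ (x = q ∧ y = p) then (1:ℂ) else 0) with hC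
      have hCapp : ∀ x y, C x y = if (x = p ∧ y = q) ∨ (x = q ∧ y = p) then (1:ℂ) else 0 :=
        fun x y => rfl
      have hCmem : C ∈ HermComm (diagonal (fun p => (d p : ℂ))) := by
        rw [mem_hermComm_diag]
        constructor
        · ext x y
          rw [conjTranspose_apply, hCapp, hCapp]
          by_cases h1 : (y = p ∧ x = q) ∨ (y = q ∧ x = p)
          · rw [if_pos h1, if_pos (by tauto)]; simp
          · rw [if_neg h1, if_neg (by tauto)]; simp
        · intro x y hxy
          rw [hCapp]
          apply if_neg
          rintro (⟨rfl, rfl⟩ | ⟨rfl, rfl⟩)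
          · exact hxy (by exact_mod_cast hdpq)
          · exact hxy (by exact_mod_cast hdpq.symm)
      have hcomm := (hsub hCmem).2
      have h2 := congrFun (congrFun hcomm p) q
      conv at h2 => rw [hBdiag]
      rw [diagonal_mul, mul_diagonal] at h2
      rw [hCapp] at h2
      rw [if_pos (Or.inl ⟨rfl, rfl⟩)] at h2
      simpa using h2
  -- the two block values
  set μ := B₀ ia ia with hμ
  set ν := B₀ ib ib with hν
  have hval : ∀ p, (d p = a ∧ B₀ p p = μ) ∨ (d p = b ∧ B₀ p p = ν) := by
    intro p
    rcases hmem p with h | h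
    · exact Or.inl ⟨h, hblock p ia (by rw [h, hia])⟩
    · exact Or.inr ⟨h, hblock p ib (by rw [h, hib])⟩
  have hμν : μ ≠ ν := by
    intro h
    -- then B₀ is scalar
    have hreal : (μ.re : ℂ) = μ := by
      have := congrFun (congrFun hB₀ ia) ia
      rw [conjTranspose_apply] at this
      exact Complex.conj_eq_iff_re.mp this
    apply hns μ.re
    rw [hBdiag]
    have : (fun p => B₀ p p) = fun _ => (μ.re : ℂ) := by
      funext p
      rcases hval p with ⟨_, h2⟩ | ⟨_, h2⟩
      · rw [h2, hreal]
      · rw [h2, ← h, hreal]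
    rw [this, diag_const_eq_smul_one]
  -- conclude
  intro C hC
  rw [mem_hermComm_diag]
  refine ⟨hC.1, fun x y hxy => ?_⟩
  have hcomm : B₀ * C = C * B₀ := hC.2
  rw [hBdiag, diag_comm_iff] at hcomm
  apply hcomm
  have hdxy : d x ≠ d y := fun h => hxy (by rw [h])
  rcases hval x with ⟨h1, h2⟩ | ⟨h1, h2⟩ <;> rcases hval y with ⟨h3, h4⟩ | ⟨h3, h4⟩
  · exact absurd (h1.trans h3.symm) hdxy
  · rw [h2, h4]; exact hμν
  · rw [h2, h4]; exact fun h => hμν h.symm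
  · exact absurd (h1.trans h3.symm) hdxy

end ThreeEV

open ThreeEV

theorem three_eigenvalues_commutant_not_maximal {n : ℕ} (hn : 3 ≤ n) :
    (∀ A : Matrix (Fin n) (Fin n) ℂ, A.IsHermitian → 3 ≤ (spectrum ℂ A).ncard →
      ∃ B : Matrix (Fin n) (Fin n) ℂ, B.IsHermitian ∧ Nonscalar B ∧
        HermComm A ⊆ HermComm B ∧ HermComm A ≠ HermComm B) ∧
    (∀ A : Matrix (Fin n) (Fin n) ℂ, A.IsHermitian → Nonscalar A →
      ((spectrum ℂ A).ncard = 2 ↔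
        ¬ ∃ B : Matrix (Fin n) (Fin n) ℂ, B.IsHermitian ∧ Nonscalar B ∧
          HermComm A ⊂ HermComm B)) := by
  refine ⟨fun A hA h3 => part1 A hA h3, fun A hA hns => ?_⟩
  set U := hA.eigenvectorUnitary with hU
  set d := hA.eigenvalues with hd
  set D : Matrix (Fin n) (Fin n) ℂ := diagonal (fun p => (d p : ℂ)) with hD
  have hAeq : A = (U : Matrix (Fin n) (Fin n) ℂ) * D * star (U : Matrix (Fin n) (Fin n) ℂ) :=
    hA.spectral_theorem
  constructor
  · -- ncard = 2 → maximal
    intro h2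
    rintro ⟨B, hBh, hBns, hBsub⟩
    rw [ncard_spec hA, ← hd] at h2
    obtain ⟨a, b, hab, hrange⟩ := Set.ncard_eq_two.mp h2
    have hmem : ∀ p, d p = a ∨ d p = b := by
      intro p
      have : d p ∈ Set.range d := Set.mem_range_self p
      rw [hrange] at this
      simpa using this
    have haex : ∃ p, d p = a := by
      have : a ∈ Set.range d := by rw [hrange]; simp
      exact this
    have hbex : ∃ p, d p = b := by
      have : b ∈ Set.range d := by rw [hrange]; simp
      exact this
    -- conjugate B
    set B₀ : Matrix (Fin n) (Fin n) ℂ :=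
      star (U : Matrix (Fin n) (Fin n) ℂ) * B * (U : Matrix (Fin n) (Fin n) ℂ) with hB₀
    have hBeq : B = (U : Matrix (Fin n) (Fin n) ℂ) * B₀ * star (U : Matrix (Fin n) (Fin n) ℂ) :=
      (conj_conj U B).symm
    have hB₀h : B₀.IsHermitian := by
      rw [hBeq, isHermitian_conj_iff] at hBh
      exact hBh
    have hB₀ns : Nonscalar B₀ := by
      rw [hBeq, nonscalar_conj_iff] at hBns
      exact hBns
    have hsubD : HermComm D ⊆ HermComm B₀ := by
      intro C hC
      have : (U : Matrix (Fin n) (Fin n) ℂ) * C * star (U : Matrix (Fin n) (Fin n) ℂ)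
          ∈ HermComm A := by
        rw [hAeq, hermComm_conj_mem]
        exact hC
      have := hBsub.1 this
      rw [hBeq, hermComm_conj_mem] at this
      exact this
    have hsubB : HermComm B₀ ⊆ HermComm D :=
      part2_diag d hab hmem haex hbex B₀ hB₀h hB₀ns hsubD
    apply hBsub.2
    intro C hC
    rw [hBeq, mem_hermComm_conj_iff] at hC
    rw [hAeq, mem_hermComm_conj_iff]
    exact hsubB hC
  · -- maximal → ncard = 2
    intro hmax
    by_contra hne
    -- first, ncard ≥ 1
    have hpos : 0 < n := by omega
    have hFin : Nonempty (Fin n) := ⟨⟨0, hpos⟩⟩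
    have hne0 : (Set.range d).Nonempty := Set.range_nonempty d
    have hfin : (Set.range d).Finite := Set.finite_range d
    have h1 : 1 ≤ (Set.range d).ncard := by
      rw [Nat.one_le_iff_ne_zero]
      intro h
      rw [Set.ncard_eq_zero hfin] at h
      exact Set.not_nonempty_empty (h ▸ hne0)
    have hne1 : (Set.range d).ncard ≠ 1 := by
      intro h
      obtain ⟨a, hrange⟩ := Set.ncard_eq_one.mp h
      have hconst : ∀ p, d p = a := by
        intro p
        have : d p ∈ Set.range d := Set.mem_range_self p
        rw [hrange] at this
        simpa using this
      apply hns a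
      rw [hAeq]
      have : D = (a : ℂ) • 1 := by
        rw [hD]
        have : (fun p => ((d p : ℝ) : ℂ)) = fun _ : Fin n => (a : ℂ) := by
          funext p; rw [hconst p]
        rw [this, diag_const_eq_smul_one]
      rw [this, conj_smul_one]
    have hne2 : (Set.range d).ncard ≠ 2 := by
      rw [ncard_spec hA, ← hd] at hne
      exact hne
    have h3 : 3 ≤ (spectrum ℂ A).ncard := by
      rw [ncard_spec hA, ← hd]
      omega
    obtain ⟨B, hBh, hBns, hBsub, hBne⟩ := part1 A hA h3
    exact hmax ⟨B, hBh, hBns, ssubset_of_subset_of_ne hBsub hBne⟩
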